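/- arXiv:2406.09013 — 4 statements merged into one kernel-verified Lean document; each statement's English description precedes it below -/
import Mathlib

section
/- Let E be a Banach lattice and A a norm-bounded subset of E. Then T(A) is relatively compact in c₀ for every almost Dunford–Pettis operator T : E → c₀ if and only if every weak*-null almost L-sequence (fₙ) in E′ converges uniformly to zero on A, i.e. sup_{x∈A} |fₙ(x)| → 0. -/
open Filter Topology ZeroAtInfty Set Bornology

noncomputable section

section Defs

variable {E F X : Type*}

/-- Two elements of a lattice group are (lattice) disjoint. -/
def LatDisjoint [Lattice E] [AddCommGroup E] (x y : E) : Prop := |x| ⊓ |y| = 0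

/-- A pairwise disjoint sequence. -/
def DisjointSeq [Lattice E] [AddCommGroup E] (x : ℕ → E) : Prop :=
  ∀ m n, m ≠ n → LatDisjoint (x m) (x n)

variable [NormedAddCommGroup X] [NormedSpace ℝ X]

/-- A weakly null sequence in a normed space. -/
def WeaklyNull (x : ℕ → X) : Prop :=
  ∀ f : X →L[ℝ] ℝ, Tendsto (fun n => f (x n)) atTop (𝓝 0)

/-- A weakly Cauchy sequence. -/
def WeaklyCauchy (x : ℕ → X) : Prop :=
  ∀ f : X →L[ℝ] ℝ, ∃ l : ℝ, Tendsto (fun n => f (x n)) atTop (𝓝 l)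

/-- A weakly precompact set: every sequence has a weakly Cauchy subsequence. -/
def WeaklyPrecompactSet (A : Set X) : Prop :=
  ∀ x : ℕ → X, (∀ n, x n ∈ A) → ∃ φ : ℕ → ℕ, StrictMono φ ∧ WeaklyCauchy (x ∘ φ)

/-- A relatively weakly compact set: closure in the weak topology is compact. -/
def RelWeaklyCompact (A : Set X) : Prop :=
  IsCompact (closure ((toWeakSpace ℝ X) '' A))

/-- A weakly sequentially complete space. -/
def WeaklySeqComplete (X : Type*) [NormedAddCommGroup X] [NormedSpace ℝ X] : Prop :=
  ∀ x : ℕ → X, WeaklyCauchy x → ∃ l : X, ∀ f : X →L[ℝ] ℝ,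
    Tendsto (fun n => f (x n)) atTop (𝓝 (f l))

/-- A weak*-null sequence of functionals. -/
def WeakStarNull (f : ℕ → X →L[ℝ] ℝ) : Prop :=
  ∀ x : X, Tendsto (fun n => f n x) atTop (𝓝 0)

/-- A sequence of functionals converges uniformly to zero on a set `A`. -/
def UnifZeroOn (f : ℕ → X →L[ℝ] ℝ) (A : Set X) : Prop :=
  ∀ ε > (0:ℝ), ∃ N : ℕ, ∀ n ≥ N, ∀ x ∈ A, |f n x| < ε

/-- A limited set. -/
def LimitedSet (A : Set X) : Prop :=
  IsBounded A ∧ ∀ f : ℕ → X →L[ℝ] ℝ, WeakStarNull f → UnifZeroOn f A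

variable [NormedAddCommGroup E] [Lattice E] [HasSolidNorm E] [IsOrderedAddMonoid E] [NormedSpace ℝ E]
  [NormedAddCommGroup F] [Lattice F] [HasSolidNorm F] [IsOrderedAddMonoid F] [NormedSpace ℝ F]

/-- An almost Dunford–Pettis operator: sends disjoint weakly null sequences to norm null ones. -/
def AlmostDP (T : E →L[ℝ] X) : Prop :=
  ∀ x : ℕ → E, DisjointSeq x → WeaklyNull x → Tendsto (fun n => ‖T (x n)‖) atTop (𝓝 0)

/-- A Dunford–Pettis operator: sends weakly null sequences to norm null ones. -/
def DunfordPettisOp (T : E →L[ℝ] X) : Prop :=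
  ∀ x : ℕ → E, WeaklyNull x → Tendsto (fun n => ‖T (x n)‖) atTop (𝓝 0)

/-- An almost L-set in the dual: disjoint weakly null sequences of `E` converge to zero
uniformly on `B`. -/
def AlmostLSet (B : Set (E →L[ℝ] ℝ)) : Prop :=
  IsBounded B ∧ ∀ x : ℕ → E, DisjointSeq x → WeaklyNull x →
    ∀ ε > (0:ℝ), ∃ N : ℕ, ∀ n ≥ N, ∀ f ∈ B, |f (x n)| < ε

/-- An almost L-sequence in the dual. -/
def AlmostLSeq (f : ℕ → E →L[ℝ] ℝ) : Prop := AlmostLSet (Set.range f)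

/-- A super weakly precompact set: a bounded set mapped to a relatively compact subset of `c₀`
by every almost Dunford–Pettis operator. -/
def SuperWeaklyPrecompact (A : Set E) : Prop :=
  IsBounded A ∧ ∀ T : E →L[ℝ] C₀(ℕ, ℝ), AlmostDP T → IsCompact (closure (T '' A))

/-- The solid hull of a set in a Banach lattice. -/
def SolidHull (A : Set E) : Set E := {y | ∃ x ∈ A, |y| ≤ |x|}

/-- An L-weakly compact set. -/
def LWeaklyCompact (A : Set E) : Prop :=
  IsBounded A ∧ ∀ x : ℕ → E, (∀ n, x n ∈ SolidHull A) → DisjointSeq x →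
    Tendsto (fun n => ‖x n‖) atTop (𝓝 0)

/-- A disjointly weakly compact set. -/
def DisjointlyWeaklyCompact (A : Set E) : Prop :=
  IsBounded A ∧ ∀ x : ℕ → E, (∀ n, x n ∈ SolidHull A) → DisjointSeq x → WeaklyNull x

/-- The positive Schur property. -/
def PositiveSchur (E : Type*) [NormedAddCommGroup E] [Lattice E] [HasSolidNorm E] [IsOrderedAddMonoid E] [NormedSpace ℝ E] : Prop :=
  ∀ x : ℕ → E, DisjointSeq x → WeaklyNull x → Tendsto (fun n => ‖x n‖) atTop (𝓝 0)

/-- `|f|(|x|)`, via the Riesz–Kantorovich formula `|f|(|x|) = sup {f y : |y| ≤ |x|}`. -/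
def pabs (f : E →L[ℝ] ℝ) (x : E) : ℝ := sSup ((fun y => f y) '' {y : E | |y| ≤ |x|})

/-- Totally bounded for the absolute weak topology `|σ|(E,E')` generated by the
seminorms `x ↦ |f|(|x|)`. -/
def AWTotallyBounded (A : Set E) : Prop :=
  ∀ ε > (0:ℝ), ∀ s : Finset (E →L[ℝ] ℝ), ∃ Φ : Finset E, ↑Φ ⊆ A ∧
    ∀ x ∈ A, ∃ y ∈ Φ, ∀ f ∈ s, pabs f (x - y) < ε

/-- Pointwise order on the dual: `f ≤ g` iff `f x ≤ g x` for all `x ≥ 0`. -/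
def dualLe (f g : E →L[ℝ] ℝ) : Prop := ∀ x : E, 0 ≤ x → f x ≤ g x

/-- Order bounded operator: maps order intervals into order intervals. -/
def OrderBoundedOp (T : E →L[ℝ] F) : Prop :=
  ∀ a b : E, ∃ c d : F, T '' Set.Icc a b ⊆ Set.Icc c d

/-- PL-compact operator: the image of the closed unit ball is `|σ|(F,F')`-totally bounded. -/
def PLCompact (T : E →L[ℝ] F) : Prop :=
  AWTotallyBounded (T '' Metric.closedBall 0 1)

/-- AMAL-compact operator: the image of every order interval is `|σ|(F,F')`-totally bounded. -/
def AMALCompact (T : E →L[ℝ] F) : Prop :=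
  ∀ x : E, 0 ≤ x → AWTotallyBounded (T '' Set.Icc (-x) x)

/-- The dual norm is order continuous: `‖f_α‖ → 0` for every decreasing net `f_α ↓ 0`
of positive functionals. -/
def DualOrderContinuousNorm (E : Type*) [NormedAddCommGroup E] [Lattice E] [HasSolidNorm E] [IsOrderedAddMonoid E] [NormedSpace ℝ E] : Prop :=
  ∀ (ι : Type) (_ : Preorder ι) (_ : Nonempty ι),
    (∀ i j : ι, ∃ k, i ≤ k ∧ j ≤ k) → ∀ f : ι → E →L[ℝ] ℝ,
    (∀ i j, i ≤ j → dualLe (f j) (f i)) →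
    (∀ i, dualLe 0 (f i)) →
    (∀ g, (∀ i, dualLe g (f i)) → dualLe g 0) →
    Tendsto (fun i => ‖f i‖) atTop (𝓝 0)

/-- An atom of the dual lattice: a positive nonzero functional such that any two disjoint
positive functionals below it cannot both be nonzero. -/
def DualAtom (a : E →L[ℝ] ℝ) : Prop :=
  dualLe 0 a ∧ a ≠ 0 ∧
  ∀ b c : E →L[ℝ] ℝ, dualLe 0 b → dualLe b a → dualLe 0 c → dualLe c a →
    (∀ x : E, 0 ≤ x → ∀ ε > (0:ℝ), ∃ y : E, 0 ≤ y ∧ y ≤ x ∧ b y + c (x - y) < ε) →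
    b = 0 ∨ c = 0

/-- `|f|` is disjoint from the positive functional `a`, i.e. `(|f| ⊓ a)(x) = 0` for `x ≥ 0`. -/
def dualAbsDisjoint (f a : E →L[ℝ] ℝ) : Prop :=
  ∀ x : E, 0 ≤ x → ∀ ε > (0:ℝ), ∃ y : E, 0 ≤ y ∧ y ≤ x ∧ pabs f y + a (x - y) < ε

/-- The dual Banach lattice is discrete: the band generated by its atoms is everything,
i.e. the disjoint complement of the set of atoms is trivial. -/
def DualDiscrete (E : Type*) [NormedAddCommGroup E] [Lattice E] [HasSolidNorm E] [IsOrderedAddMonoid E] [NormedSpace ℝ E] : Prop :=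
  ∀ f : E →L[ℝ] ℝ, (∀ a : E →L[ℝ] ℝ, DualAtom a → dualAbsDisjoint f a) → f = 0

/-- The absolute weak* topology `|σ|(E',E)` on the dual, generated by the
seminorms `f ↦ |f|(|x|)`. -/
def awStarTop (E : Type*) [NormedAddCommGroup E] [Lattice E] [HasSolidNorm E] [IsOrderedAddMonoid E] [NormedSpace ℝ E] :
    TopologicalSpace (E →L[ℝ] ℝ) :=
  ⨅ x : E, TopologicalSpace.induced (fun f => pabs f x) inferInstance

end Defs

/-!
An operator `T : E → c₀` is the same thing as the weak*-null sequence of its coordinate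
functionals `fₙ = eₙ ∘ T`, and since the norm of `c₀` is the supremum of the coordinates, `T` is
almost Dunford–Pettis exactly when `(fₙ)` is an almost L-sequence. A bounded subset of `c₀` is
relatively compact exactly when its elements have uniformly small tails; for `T(A)` this says
that `fₙ → 0` uniformly on `A`.
-/

theorem Metric.totallyBounded_of_forall_subset_thickening {α : Type*} [PseudoMetricSpace α]
    {s : Set α} (h : ∀ ε > 0, ∃ t, TotallyBounded t ∧ s ⊆ Metric.thickening ε t) :
    TotallyBounded s := by
  refine Metric.totallyBounded_iff.2 fun ε hε => ?_
  obtain ⟨t, ht, hst⟩ := h (ε / 2) (half_pos hε)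
  obtain ⟨u, hu, htu⟩ := Metric.totallyBounded_iff.1 ht (ε / 2) (half_pos hε)
  refine ⟨u, hu, fun x hx => ?_⟩
  obtain ⟨y, hyt, hxy⟩ := Metric.mem_thickening_iff.1 (hst hx)
  obtain ⟨z, hzu, hyz⟩ := mem_iUnion₂.1 (htu hyt)
  refine mem_iUnion₂.2 ⟨z, hzu, ?_⟩
  calc dist x z ≤ dist x y + dist y z := dist_triangle x y z
    _ < ε / 2 + ε / 2 := add_lt_add hxy hyz
    _ = ε := add_halves ε

namespace ZeroAtInftyContinuousMap

section Eval

variable {α β : Type*} [TopologicalSpace α] [NormedAddCommGroup β]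

theorem norm_apply_le (f : C₀(α, β)) (x : α) : ‖f x‖ ≤ ‖f‖ :=
  f.toBCF.norm_coe_le_norm x

theorem norm_le_of_forall_norm_apply_le {f : C₀(α, β)} {C : ℝ} (hC : 0 ≤ C)
    (h : ∀ x, ‖f x‖ ≤ C) : ‖f‖ ≤ C :=
  (BoundedContinuousFunction.norm_le hC).2 h

theorem tendsto_norm_atTop_zero_iff {g : ℕ → C₀(α, β)} :
    Tendsto (fun k => ‖g k‖) atTop (𝓝 0) ↔ ∀ ε > 0, ∃ N, ∀ k ≥ N, ∀ x, ‖g k x‖ < ε := by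
  simp only [Metric.tendsto_atTop, Real.dist_eq, sub_zero, abs_norm]
  constructor
  · intro h ε hε
    obtain ⟨N, hN⟩ := h ε hε
    exact ⟨N, fun k hk x => (norm_apply_le (g k) x).trans_lt (hN k hk)⟩
  · intro h ε hε
    obtain ⟨N, hN⟩ := h (ε / 2) (half_pos hε)
    refine ⟨N, fun k hk => ?_⟩
    exact (norm_le_of_forall_norm_apply_le (half_pos hε).le fun x => (hN k hk x).le).trans_lt
      (half_lt_self hε)

variable (𝕜 : Type*) [NormedField 𝕜] [NormedSpace 𝕜 β]

def evalCLM (x : α) : C₀(α, β) →L[𝕜] β :=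
  LinearMap.mkContinuous
    { toFun f := f x
      map_add' _ _ := rfl
      map_smul' _ _ := rfl } 1
    fun f => by simpa using norm_apply_le f x

@[simp]
theorem evalCLM_apply (x : α) (f : C₀(α, β)) : evalCLM 𝕜 x f = f x := rfl

end Eval

section Nat

variable {β : Type*} [NormedAddCommGroup β]

def ofTendsto (g : ℕ → β) (hg : Tendsto g atTop (𝓝 0)) : C₀(ℕ, β) :=
  ⟨⟨g, continuous_of_discreteTopology⟩, by rwa [cocompact_eq_atTop]⟩

@[simp]
theorem ofTendsto_apply (g : ℕ → β) (hg : Tendsto g atTop (𝓝 0)) (n : ℕ) :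
    ofTendsto g hg n = g n := rfl

theorem tendsto_atTop (f : C₀(ℕ, β)) : Tendsto f atTop (𝓝 0) := by
  simpa [cocompact_eq_atTop] using zero_at_infty f

end Nat

theorem unifZeroOn_evalCLM_of_totallyBounded {S : Set C₀(ℕ, ℝ)} (hS : TotallyBounded S) :
    UnifZeroOn (evalCLM ℝ) S := by
  intro ε hε
  obtain ⟨t, ht, hSt⟩ := Metric.totallyBounded_iff.1 hS (ε / 2) (half_pos hε)
  have htail : ∀ᶠ n in atTop, ∀ g ∈ t, |g n| < ε / 2 :=
    (eventually_all_finite ht).2 fun g _ =>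
      (tendsto_atTop g).abs.eventually (gt_mem_nhds (by simpa using half_pos hε))
  obtain ⟨N, hN⟩ := eventually_atTop.1 htail
  refine ⟨N, fun n hn f hf => ?_⟩
  obtain ⟨g, hgt, hfg⟩ := mem_iUnion₂.1 (hSt hf)
  rw [evalCLM_apply]
  have hfg_n : |f n - g n| < ε / 2 :=
    (norm_apply_le (f - g) n).trans_lt (mem_ball_iff_norm.1 hfg)
  linarith [abs_sub_abs_le_abs_sub (f n) (g n), hN n hn g hgt]

def extendByZero (N : ℕ) : (Fin N → ℝ) →ₗ[ℝ] C₀(ℕ, ℝ) where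
  toFun v := ofTendsto (fun n => if h : n < N then v ⟨n, h⟩ else 0)
    (tendsto_const_nhds.congr' (eventually_atTop.2 ⟨N, fun n hn => by simp [not_lt.2 hn]⟩))
  map_add' v w := by ext n; by_cases h : n < N <;> simp [h]
  map_smul' c v := by ext n; by_cases h : n < N <;> simp [h]

theorem extendByZero_apply (N : ℕ) (v : Fin N → ℝ) (n : ℕ) :
    extendByZero N v n = if h : n < N then v ⟨n, h⟩ else 0 := rfl

/- Truncation to the first `N` coordinates moves each point of `S` by less than `ε` and lands
in a bounded subset of a finite-dimensional space. -/
theorem totallyBounded_of_unifZeroOn_evalCLM {S : Set C₀(ℕ, ℝ)} (hS : IsBounded S)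
    (h : UnifZeroOn (evalCLM ℝ) S) : TotallyBounded S := by
  refine Metric.totallyBounded_of_forall_subset_thickening fun ε hε => ?_
  obtain ⟨N, hN⟩ := h (ε / 2) (half_pos hε)
  let restrict : C₀(ℕ, ℝ) →L[ℝ] (Fin N → ℝ) :=
    ContinuousLinearMap.pi fun i => evalCLM ℝ (i : ℕ)
  refine ⟨extendByZero N '' (restrict '' S), ?_, fun f hf => ?_⟩
  · have hbdd : TotallyBounded (restrict '' S) :=
      (restrict.lipschitz.isBounded_image hS).isCompact_closure.totallyBounded.subset
        subset_closure
    exact hbdd.image (LinearMap.toContinuousLinearMap (extendByZero N)).uniformContinuous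
  · refine Metric.mem_thickening_iff.2 ⟨_, mem_image_of_mem _ (mem_image_of_mem _ hf), ?_⟩
    rw [dist_eq_norm]
    refine (norm_le_of_forall_norm_apply_le (half_pos hε).le fun n => ?_).trans_lt
      (half_lt_self hε)
    by_cases hn : n < N
    · simpa [extendByZero_apply, hn, restrict] using (half_pos hε).le
    · simpa [extendByZero_apply, hn] using (hN n (not_lt.1 hn) f hf).le

theorem isCompact_closure_iff_unifZeroOn_evalCLM {S : Set C₀(ℕ, ℝ)} (hS : IsBounded S) :
    IsCompact (closure S) ↔ UnifZeroOn (evalCLM ℝ) S :=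
  ⟨fun h => unifZeroOn_evalCLM_of_totallyBounded (h.totallyBounded.subset subset_closure),
    fun h => (totallyBounded_of_unifZeroOn_evalCLM hS h).closure.isCompact_of_isClosed
      isClosed_closure⟩

end ZeroAtInftyContinuousMap

open ZeroAtInftyContinuousMap

section Functionals

variable {X Y : Type*} [NormedAddCommGroup X] [NormedSpace ℝ X] [NormedAddCommGroup Y]
  [NormedSpace ℝ Y]

theorem unifZeroOn_comp_iff (g : ℕ → Y →L[ℝ] ℝ) (T : X →L[ℝ] Y) (A : Set X) :
    UnifZeroOn (fun n => (g n).comp T) A ↔ UnifZeroOn g (T '' A) := by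
  simp [UnifZeroOn]

theorem weakStarNull_evalCLM_comp (T : X →L[ℝ] C₀(ℕ, ℝ)) :
    WeakStarNull fun n => (evalCLM ℝ n).comp T :=
  fun x => tendsto_atTop (T x)

def WeakStarNull.toC0 {f : ℕ → X →L[ℝ] ℝ} (hf : WeakStarNull f) {C : ℝ}
    (hC : ∀ n, ‖f n‖ ≤ C) : X →L[ℝ] C₀(ℕ, ℝ) :=
  LinearMap.mkContinuous
    { toFun x := ofTendsto (fun n => f n x) (hf x)
      map_add' x y := by ext n; simp
      map_smul' c x := by ext n; simp } C
    fun x => norm_le_of_forall_norm_apply_le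
      (mul_nonneg ((norm_nonneg _).trans (hC 0)) (norm_nonneg x))
      fun n => ((f n).le_opNorm x).trans (by gcongr; exact hC n)

theorem WeakStarNull.evalCLM_comp_toC0 {f : ℕ → X →L[ℝ] ℝ} (hf : WeakStarNull f) {C : ℝ}
    (hC : ∀ n, ‖f n‖ ≤ C) (n : ℕ) : (evalCLM ℝ n).comp (hf.toC0 hC) = f n :=
  rfl

theorem isCompact_closure_image_iff_unifZeroOn (T : X →L[ℝ] C₀(ℕ, ℝ)) {A : Set X}
    (hA : IsBounded A) :
    IsCompact (closure (T '' A)) ↔ UnifZeroOn (fun n => (evalCLM ℝ n).comp T) A := by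
  rw [unifZeroOn_comp_iff]
  exact isCompact_closure_iff_unifZeroOn_evalCLM (T.lipschitz.isBounded_image hA)

end Functionals

theorem almostDP_iff_almostLSeq_evalCLM_comp {E : Type*} [NormedAddCommGroup E] [Lattice E]
    [HasSolidNorm E] [IsOrderedAddMonoid E] [NormedSpace ℝ E] (T : E →L[ℝ] C₀(ℕ, ℝ)) :
    AlmostDP T ↔ AlmostLSeq fun n => (evalCLM ℝ n).comp T := by
  have hbdd : IsBounded (range fun n => (evalCLM ℝ n).comp T) :=
    isBounded_iff_forall_norm_le.2 ⟨‖T‖, forall_mem_range.2 fun n =>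
      ContinuousLinearMap.opNorm_le_bound _ (norm_nonneg T) fun x =>
        (norm_apply_le (T x) n).trans (T.le_opNorm x)⟩
  simp only [AlmostDP, AlmostLSeq, AlmostLSet, hbdd, true_and, forall_mem_range,
    tendsto_norm_atTop_zero_iff, ContinuousLinearMap.comp_apply, evalCLM_apply, Real.norm_eq_abs]

theorem stmt0_general {E : Type*} [NormedAddCommGroup E] [Lattice E] [HasSolidNorm E] [IsOrderedAddMonoid E] [NormedSpace ℝ E] (A : Set E) (hA : IsBounded A) :
    (∀ T : E →L[ℝ] C₀(ℕ, ℝ), AlmostDP T → IsCompact (closure (T '' A))) ↔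
      (∀ f : ℕ → E →L[ℝ] ℝ, WeakStarNull f → AlmostLSeq f → UnifZeroOn f A) := by
  constructor
  · intro hcompact f hf hL
    obtain ⟨C, hC⟩ := isBounded_iff_forall_norm_le.1 hL.1
    let T := hf.toC0 fun n => hC _ (mem_range_self n)
    have hcoord : (fun n => (evalCLM ℝ n).comp T) = f := funext (hf.evalCLM_comp_toC0 _)
    have hT : AlmostDP T := (almostDP_iff_almostLSeq_evalCLM_comp T).2 (hcoord ▸ hL)
    exact hcoord ▸ (isCompact_closure_image_iff_unifZeroOn T hA).1 (hcompact T hT)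
  · intro h T hT
    exact (isCompact_closure_image_iff_unifZeroOn T hA).2
      (h _ (weakStarNull_evalCLM_comp T) ((almostDP_iff_almostLSeq_evalCLM_comp T).1 hT))

theorem stmt0 {E : Type*} [NormedAddCommGroup E] [Lattice E] [HasSolidNorm E] [IsOrderedAddMonoid E] [NormedSpace ℝ E] [CompleteSpace E] (A : Set E) (hA : IsBounded A) :
    (∀ T : E →L[ℝ] C₀(ℕ, ℝ), AlmostDP T → IsCompact (closure (T '' A))) ↔
      (∀ f : ℕ → E →L[ℝ] ℝ, WeakStarNull f → AlmostLSeq f → UnifZeroOn f A) :=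
  stmt0_general A hA

end
end

section
/- Let E be a Banach lattice and A a norm-bounded subset of E. If fₙ(xₙ) → 0 for every weak*-null almost L-sequence (fₙ) in E′ and every sequence (xₙ) in A, then sup_{x∈A} |fₙ(x)| → 0 for every weak*-null almost L-sequence (fₙ) in E′. -/
open Filter Topology ZeroAtInfty Set Bornology

noncomputable section

section UniformConvergence

variable {X : Type*} [NormedAddCommGroup X] [NormedSpace ℝ X]

lemma UnifZeroOn.tendsto_apply {f : ℕ → X →L[ℝ] ℝ} {A : Set X} (hf : UnifZeroOn f A)
    {x : ℕ → X} (hx : ∀ n, x n ∈ A) : Tendsto (fun n => f n (x n)) atTop (𝓝 0) := by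
  rw [Metric.tendsto_atTop]
  intro ε hε
  obtain ⟨N, hN⟩ := hf ε hε
  exact ⟨N, fun n hn => by simpa only [Real.dist_eq, sub_zero] using hN n hn (x n) (hx n)⟩

/-- Choose `x n ∈ A` with `ε ≤ |f n (x n)|` whenever such a point exists: without uniform
convergence this happens for infinitely many `n`. -/
lemma unifZeroOn_of_forall_tendsto_apply {f : ℕ → X →L[ℝ] ℝ} {A : Set X}
    (h : ∀ x : ℕ → X, (∀ n, x n ∈ A) → Tendsto (fun n => f n (x n)) atTop (𝓝 0)) :
    UnifZeroOn f A := by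
  intro ε hε
  by_contra! hbad
  obtain ⟨a, ha⟩ : A.Nonempty := by
    obtain ⟨_, _, y, hy, _⟩ := hbad 0
    exact ⟨y, hy⟩
  have hpick : ∀ n, ∃ y ∈ A, (∃ z ∈ A, ε ≤ |f n z|) → ε ≤ |f n y| := by
    intro n
    by_cases hn : ∃ z ∈ A, ε ≤ |f n z|
    · obtain ⟨z, hz, hfz⟩ := hn
      exact ⟨z, hz, fun _ => hfz⟩
    · exact ⟨a, ha, fun h' => absurd h' hn⟩
  choose x hxA hxε using hpick
  obtain ⟨N, hN⟩ := Metric.tendsto_atTop.1 (h x hxA) ε hε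
  obtain ⟨n, hn, z, hz, hfz⟩ := hbad N
  have hlt : |f n (x n)| < ε := by simpa only [Real.dist_eq, sub_zero] using hN n hn
  exact (hxε n ⟨z, hz, hfz⟩).not_gt hlt

lemma unifZeroOn_iff_forall_tendsto_apply {f : ℕ → X →L[ℝ] ℝ} {A : Set X} :
    UnifZeroOn f A ↔
      ∀ x : ℕ → X, (∀ n, x n ∈ A) → Tendsto (fun n => f n (x n)) atTop (𝓝 0) :=
  ⟨fun hf _ hx => hf.tendsto_apply hx, unifZeroOn_of_forall_tendsto_apply⟩

end UniformConvergence

theorem stmt1_general {E : Type*} [NormedAddCommGroup E] [Lattice E] [HasSolidNorm E] [IsOrderedAddMonoid E] [NormedSpace ℝ E] (A : Set E)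
    (h : ∀ f : ℕ → E →L[ℝ] ℝ, WeakStarNull f → AlmostLSeq f →
      ∀ x : ℕ → E, (∀ n, x n ∈ A) → Tendsto (fun n => f n (x n)) atTop (𝓝 0)) :
    ∀ f : ℕ → E →L[ℝ] ℝ, WeakStarNull f → AlmostLSeq f → UnifZeroOn f A :=
  fun f hws hL => unifZeroOn_iff_forall_tendsto_apply.2 (h f hws hL)

theorem stmt1 {E : Type*} [NormedAddCommGroup E] [Lattice E] [HasSolidNorm E] [IsOrderedAddMonoid E] [NormedSpace ℝ E] [CompleteSpace E] (A : Set E) (hA : IsBounded A)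
    (h : ∀ f : ℕ → E →L[ℝ] ℝ, WeakStarNull f → AlmostLSeq f →
      ∀ x : ℕ → E, (∀ n, x n ∈ A) → Tendsto (fun n => f n (x n)) atTop (𝓝 0)) :
    ∀ f : ℕ → E →L[ℝ] ℝ, WeakStarNull f → AlmostLSeq f → UnifZeroOn f A :=
  stmt1_general A h
end
end

section
/- Every |σ|(E,E′)-totally bounded subset A of a Banach lattice E is disjointly weakly compact, i.e., every disjoint sequence in the solid hull of A is weakly null. -/
open Filter Topology ZeroAtInfty Set Bornology

noncomputable section

/-!
Let `(x n)` be disjoint with `|x n| ≤ |a n|`, `a n ∈ A`, and let `f ∈ E'`. The Riesz–Kantorovich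
functional `|f|(|·|)` dominates `|f (·)|` and is subadditive by the Riesz decomposition property, so
`|f (x n)| ≤ |f|(|a n - z|) + |f|(|x n| ⊓ |z|)` for every `z`. Total boundedness for `|σ|(E,E')`
gives a finite set `Φ` such that for each `n` some `z ∈ Φ` makes the first term small. The
`|x n| ⊓ |z|` are disjoint positive elements below `|z|`, so `∑ₙ |f|(|x n| ⊓ |z|) ≤ |f|(|z|)` and the
second term tends to `0`, uniformly over the finitely many `z ∈ Φ`.
-/

section LatticeOrderedGroup

variable {α : Type*} [AddCommGroup α] [Lattice α] [IsOrderedAddMonoid α]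

/-- The Riesz decomposition property. -/
lemma exists_abs_le_and_abs_sub_le_of_abs_le_add {y u v : α} (hu : 0 ≤ u) (hv : 0 ≤ v)
    (h : |y| ≤ u + v) : ∃ y₁, |y₁| ≤ u ∧ |y - y₁| ≤ v := by
  obtain ⟨hyuv, hnyuv⟩ := abs_le'.1 h
  refine ⟨(y ⊓ u) ⊔ -u, abs_le'.2 ⟨sup_le inf_le_right (neg_le_self hu), ?_⟩, abs_le'.2 ⟨?_, ?_⟩⟩
  · exact neg_le.1 le_sup_right
  · refine sub_le_comm.1 (le_sup_of_le_left (le_inf (sub_le_self y hv) ?_))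
    exact sub_le_iff_le_add.2 hyuv
  · rw [neg_sub, sub_le_iff_le_add]
    refine sup_le (inf_le_left.trans (le_add_of_nonneg_left hv)) ?_
    rw [neg_le_iff_add_nonneg] at hnyuv ⊢
    exact hnyuv.trans_eq (by abel)

lemma inf_add_le_inf_add_inf {a b c : α} (ha : 0 ≤ a) (hb : 0 ≤ b) (hc : 0 ≤ c) :
    a ⊓ (b + c) ≤ a ⊓ b + a ⊓ c := by
  have hsub : a ⊓ (b + c) - a ⊓ b ≤ a ⊓ c := by
    refine le_inf ((sub_le_self _ (le_inf ha hb)).trans inf_le_left) ?_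
    rw [sub_inf]
    exact sup_le ((sub_nonpos.2 inf_le_left).trans hc)
      (sub_le_iff_le_add.2 (inf_le_right.trans_eq (add_comm b c)))
  simpa [add_comm] using add_le_add_right hsub (a ⊓ b)

lemma inf_sum_eq_zero {ι : Type*} {a : α} (ha : 0 ≤ a) (s : Finset ι) {u : ι → α}
    (hu : ∀ i, 0 ≤ u i) (h : ∀ i ∈ s, a ⊓ u i = 0) : a ⊓ ∑ i ∈ s, u i = 0 := by
  induction s using Finset.cons_induction with
  | empty => simpa using ha
  | cons k s hk ih =>
    rw [Finset.forall_mem_cons] at h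
    rw [Finset.sum_cons]
    refine le_antisymm ?_ (le_inf ha (add_nonneg (hu k) (Finset.sum_nonneg fun i _ => hu i)))
    calc a ⊓ (u k + ∑ i ∈ s, u i) ≤ a ⊓ u k + a ⊓ ∑ i ∈ s, u i :=
          inf_add_le_inf_add_inf ha (hu k) (Finset.sum_nonneg fun i _ => hu i)
      _ = 0 := by rw [h.1, ih h.2, add_zero]

/-- A sum of pairwise disjoint positive elements is their supremum. -/
lemma sum_le_of_pairwise_inf_eq_zero {ι : Type*} (s : Finset ι) {u : ι → α} {w : α}
    (hu : ∀ i, 0 ≤ u i) (hd : Pairwise fun i j => u i ⊓ u j = 0) (hw0 : 0 ≤ w)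
    (hw : ∀ i, u i ≤ w) : ∑ i ∈ s, u i ≤ w := by
  induction s using Finset.cons_induction with
  | empty => simpa using hw0
  | cons k s hk ih =>
    have hdisj : u k ⊓ ∑ i ∈ s, u i = 0 :=
      inf_sum_eq_zero (hu k) s hu fun i hi => hd fun hki => hk (hki ▸ hi)
    rw [Finset.sum_cons, ← inf_add_sup, hdisj, zero_add]
    exact sup_le (hw k) ih

lemma abs_le_abs_sub_add_abs_inf {x a : α} (h : |x| ≤ |a|) (z : α) :
    |x| ≤ |a - z| + |x| ⊓ |z| :=
  calc |x| ≤ |x| ⊓ (|a - z| + |z|) :=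
        le_inf le_rfl (h.trans ((abs_add_le (a - z) z).trans_eq' (by rw [sub_add_cancel])))
    _ ≤ |x| ⊓ |a - z| + |x| ⊓ |z| :=
        inf_add_le_inf_add_inf (abs_nonneg _) (abs_nonneg _) (abs_nonneg _)
    _ ≤ |a - z| + |x| ⊓ |z| := add_le_add inf_le_right le_rfl

end LatticeOrderedGroup

section RieszKantorovich

variable {E : Type*} [NormedAddCommGroup E] [Lattice E] [HasSolidNorm E] [IsOrderedAddMonoid E]
  [NormedSpace ℝ E] (f : E →L[ℝ] ℝ)

omit [HasSolidNorm E] in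
lemma pabs_abs (x : E) : pabs f |x| = pabs f x := by
  simp only [pabs, abs_abs]

omit [IsOrderedAddMonoid E] in
lemma bddAbove_pabs_set (x : E) : BddAbove ((fun y => f y) '' {y : E | |y| ≤ |x|}) := by
  refine ⟨‖f‖ * ‖x‖, ?_⟩
  rintro _ ⟨y, hy, rfl⟩
  calc f y ≤ ‖f y‖ := Real.le_norm_self _
    _ ≤ ‖f‖ * ‖y‖ := f.le_opNorm y
    _ ≤ ‖f‖ * ‖x‖ := by gcongr; exact norm_le_norm_of_abs_le_abs hy

omit [HasSolidNorm E] in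
lemma nonempty_pabs_set (x : E) : ((fun y => f y) '' {y : E | |y| ≤ |x|}).Nonempty :=
  ⟨f 0, 0, by simp, rfl⟩

omit [IsOrderedAddMonoid E] in
lemma le_pabs {x y : E} (h : |y| ≤ |x|) : f y ≤ pabs f x :=
  le_csSup (bddAbove_pabs_set f x) ⟨y, h, rfl⟩

omit [IsOrderedAddMonoid E] in
lemma abs_le_pabs {x y : E} (h : |y| ≤ |x|) : |f y| ≤ pabs f x :=
  abs_le'.2 ⟨le_pabs f h, by simpa using le_pabs f (y := -y) (by rwa [abs_neg])⟩

lemma pabs_nonneg (x : E) : 0 ≤ pabs f x := by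
  simpa using le_pabs f (y := 0) (by simp)

lemma pabs_mono {x y : E} (h : |x| ≤ |y|) : pabs f x ≤ pabs f y :=
  csSup_le_csSup (bddAbove_pabs_set f y) (nonempty_pabs_set f x)
    (Set.image_mono fun _ hz => hz.trans h)

lemma pabs_le_add_of_abs_le {z u v : E} (hu : 0 ≤ u) (hv : 0 ≤ v) (h : |z| ≤ u + v) :
    pabs f z ≤ pabs f u + pabs f v := by
  refine csSup_le (nonempty_pabs_set f z) ?_
  rintro _ ⟨y, hy, rfl⟩
  obtain ⟨y₁, hy₁, hy₂⟩ := exists_abs_le_and_abs_sub_le_of_abs_le_add hu hv (hy.trans h)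
  calc f y = f y₁ + f (y - y₁) := by rw [← map_add, add_sub_cancel]
    _ ≤ pabs f u + pabs f v := by
      gcongr
      · exact le_pabs f (hy₁.trans_eq (abs_of_nonneg hu).symm)
      · exact le_pabs f (hy₂.trans_eq (abs_of_nonneg hv).symm)

lemma add_pabs_le {u v : E} (hu : 0 ≤ u) (hv : 0 ≤ v) :
    pabs f u + pabs f v ≤ pabs f (u + v) := by
  rw [pabs, pabs, ← csSup_add (nonempty_pabs_set f u) (bddAbove_pabs_set f u)
    (nonempty_pabs_set f v) (bddAbove_pabs_set f v)]
  refine csSup_le ((nonempty_pabs_set f u).add (nonempty_pabs_set f v)) ?_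
  rintro _ ⟨_, ⟨y₁, hy₁, rfl⟩, _, ⟨y₂, hy₂, rfl⟩, rfl⟩
  show f y₁ + f y₂ ≤ _
  rw [← map_add]
  refine le_pabs f ((abs_add_le y₁ y₂).trans ?_)
  rw [abs_of_nonneg (add_nonneg hu hv)]
  exact add_le_add (hy₁.trans_eq (abs_of_nonneg hu)) (hy₂.trans_eq (abs_of_nonneg hv))

lemma sum_pabs_le_pabs_sum {ι : Type*} (s : Finset ι) {u : ι → E} (hu : ∀ i, 0 ≤ u i) :
    ∑ i ∈ s, pabs f (u i) ≤ pabs f (∑ i ∈ s, u i) := by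
  induction s using Finset.cons_induction with
  | empty => simpa using pabs_nonneg f 0
  | cons k s hk ih =>
    rw [Finset.sum_cons, Finset.sum_cons]
    exact (add_le_add le_rfl ih).trans
      (add_pabs_le f (hu k) (Finset.sum_nonneg fun i _ => hu i))

/-- `|f|` is a positive functional, so it is summable along the pairwise disjoint pieces
`|x n| ⊓ |y|` of `|y|`. -/
lemma DisjointSeq.tendsto_pabs_inf {x : ℕ → E} (hx : DisjointSeq x) (y : E) :
    Tendsto (fun n => pabs f (|x n| ⊓ |y|)) atTop (𝓝 0) := by
  set u : ℕ → E := fun n => |x n| ⊓ |y|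
  have hu : ∀ n, 0 ≤ u n := fun n => le_inf (abs_nonneg _) (abs_nonneg _)
  have hd : Pairwise fun m n => u m ⊓ u n = 0 := fun m n hmn =>
    le_antisymm ((inf_le_inf inf_le_left inf_le_left).trans (hx m n hmn).le) (le_inf (hu m) (hu n))
  refine (summable_of_sum_le (c := pabs f y) (fun n => pabs_nonneg f (u n)) fun s => ?_)
    |>.tendsto_atTop_zero
  refine (sum_pabs_le_pabs_sum f s hu).trans (pabs_mono f ?_)
  rw [abs_of_nonneg (Finset.sum_nonneg fun n _ => hu n)]
  exact sum_le_of_pairwise_inf_eq_zero s hu hd (abs_nonneg y) fun n => inf_le_right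

lemma pabs_le_pabs_sub_add_pabs_inf {x a : E} (h : |x| ≤ |a|) (z : E) :
    pabs f x ≤ pabs f (a - z) + pabs f (|x| ⊓ |z|) := by
  rw [← pabs_abs f (a - z)]
  exact pabs_le_add_of_abs_le f (abs_nonneg _) (le_inf (abs_nonneg _) (abs_nonneg _))
    (abs_le_abs_sub_add_abs_inf h z)

end RieszKantorovich

theorem stmt12_general {E : Type*} [NormedAddCommGroup E] [Lattice E] [HasSolidNorm E] [IsOrderedAddMonoid E] [NormedSpace ℝ E] (A : Set E) (hA : AWTotallyBounded A) :
    ∀ x : ℕ → E, (∀ n, x n ∈ SolidHull A) → DisjointSeq x → WeaklyNull x := by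
  intro x hx hdisj f
  choose a haA hxa using hx
  refine Metric.tendsto_nhds.2 fun ε hε => ?_
  obtain ⟨Φ, -, hΦ⟩ := hA (ε / 2) (half_pos hε) {f}
  have hsmall : ∀ᶠ n in atTop, ∀ z ∈ Φ, pabs f (|x n| ⊓ |z|) < ε / 2 :=
    Φ.eventually_all.2 fun z _ => (hdisj.tendsto_pabs_inf f z).eventually_lt_const (half_pos hε)
  filter_upwards [hsmall] with n hn
  obtain ⟨z, hzΦ, hz⟩ := hΦ (a n) (haA n)
  rw [Real.dist_eq, sub_zero]
  calc |f (x n)| ≤ pabs f (x n) := abs_le_pabs f le_rfl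
    _ ≤ pabs f (a n - z) + pabs f (|x n| ⊓ |z|) := pabs_le_pabs_sub_add_pabs_inf f (hxa n) z
    _ < ε / 2 + ε / 2 := add_lt_add (hz f (Finset.mem_singleton_self f)) (hn z hzΦ)
    _ = ε := add_halves ε

theorem stmt12 {E : Type*} [NormedAddCommGroup E] [Lattice E] [HasSolidNorm E] [IsOrderedAddMonoid E] [NormedSpace ℝ E] [CompleteSpace E] (A : Set E) (hA : AWTotallyBounded A) :
    ∀ x : ℕ → E, (∀ n, x n ∈ SolidHull A) → DisjointSeq x → WeaklyNull x :=
  stmt12_general A hA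
end
end

section
/- Let E and F be Banach lattices. If every Dunford–Pettis operator T : E → F is PL-compact, then either E′ has order continuous norm or F′ has order continuous norm. -/
open Filter Topology ZeroAtInfty Set Bornology

noncomputable section

/-! If neither dual has order continuous norm, telescoping a net `f_α ↓ 0` of positive
functionals with `‖f_α‖ ≥ ε` gives, in `E′` and in `F′`, positive functionals `g n` with
`∑ g n ≤ f` and positive unit vectors `x n` with `g n (x n) ≥ δ`. From the data `(g n, x n)` of `E`
and `(g' n, y n)` of `F` put `T z = ∑ g n z • y n`. Since `z ↦ (g n z)ₙ` is bounded into `ℓ¹`,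
which has the Schur property, `T` is Dunford–Pettis. But `g' n (T (x n)) ≥ δ δ'`, while `g' n → 0`
pointwise and `|g' n| ≤ |f'|`, so `T (B_E)` is not `|σ|(F, F′)`-totally bounded. -/

section PositiveFunctional

variable {G : Type*} [NormedAddCommGroup G] [Lattice G] [NormedSpace ℝ G]

lemma apply_abs_le_opNorm_mul [IsOrderedAddMonoid G] [HasSolidNorm G] (f : G →L[ℝ] ℝ) (x : G) :
    f |x| ≤ ‖f‖ * ‖x‖ := by
  simpa only [norm_abs_eq_norm] using (le_abs_self _).trans (f.le_opNorm |x|)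

lemma apply_abs_le_pabs [IsOrderedAddMonoid G] [HasSolidNorm G] (f : G →L[ℝ] ℝ) (x : G) :
    f |x| ≤ pabs f x := by
  refine le_csSup ⟨‖f‖ * ‖x‖, ?_⟩ ⟨|x|, by simp, rfl⟩
  rintro _ ⟨y, hy, rfl⟩
  calc f y ≤ ‖f‖ * ‖y‖ := (le_abs_self _).trans (f.le_opNorm y)
    _ ≤ ‖f‖ * ‖x‖ := by gcongr; exact norm_le_norm_of_abs_le_abs hy

namespace dualLe

variable {f g : G →L[ℝ] ℝ}

lemma apply_nonneg (hf : dualLe 0 f) {x : G} (hx : 0 ≤ x) : 0 ≤ f x := by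
  simpa using hf x hx

variable [IsOrderedAddMonoid G]

lemma monotone (hf : dualLe 0 f) : Monotone f := fun x y hxy => by
  simpa using hf.apply_nonneg (sub_nonneg.2 hxy)

lemma abs_apply_le (hf : dualLe 0 f) (x : G) : |f x| ≤ f |x| :=
  abs_le.2
    ⟨by linarith [map_neg f x ▸ hf.monotone (neg_le_abs x)], hf.monotone (le_abs_self x)⟩

lemma opNorm_le [HasSolidNorm G] (hf : dualLe 0 f) (hfg : dualLe f g) : ‖f‖ ≤ ‖g‖ :=
  f.opNorm_le_bound (norm_nonneg g) fun x =>
    (hf.abs_apply_le x).trans ((hfg _ (abs_nonneg x)).trans (apply_abs_le_opNorm_mul g x))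

lemma exists_nonneg_lt_apply [HasSolidNorm G] (hf : dualLe 0 f) {c : ℝ} (hc : c < ‖f‖) :
    ∃ u : G, 0 ≤ u ∧ ‖u‖ ≤ 1 ∧ c < f u := by
  obtain ⟨x, hx, hcx⟩ := f.exists_lt_apply_of_lt_opNorm hc
  exact ⟨|x|, abs_nonneg x, (norm_abs_eq_norm x).trans_le hx.le,
    hcx.trans_le (hf.abs_apply_le x)⟩

end dualLe

end PositiveFunctional

lemma abs_tsum_le_tsum_abs {x : ℕ → ℝ} (hx : Summable fun n => |x n|) :
    |∑' n, x n| ≤ ∑' n, |x n| := by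
  simpa only [Real.norm_eq_abs] using
    norm_tsum_le_tsum_norm (f := x) (by simpa only [Real.norm_eq_abs] using hx)

lemma StrictMono.exists_index_of_mem_Ico {M : ℕ → ℕ} (hM : StrictMono M) :
    ∃ κ : ℕ → ℕ, ∀ k n, n ∈ Finset.Ico (M k) (M (k + 1)) → κ n = k := by
  classical
  refine ⟨fun n => Nat.findGreatest (fun k => M k ≤ n) n, fun k n hn => ?_⟩
  rw [Finset.mem_Ico] at hn
  have hk : k ≤ n := hM.le_apply.trans hn.1
  have hle : k ≤ Nat.findGreatest (fun k => M k ≤ n) n := Nat.le_findGreatest hk hn.1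
  have hspec : M (Nat.findGreatest (fun k => M k ≤ n) n) ≤ n :=
    Nat.findGreatest_spec (P := fun k => M k ≤ n) hk hn.1
  have := hM.lt_iff_lt.mp (hspec.trans_lt hn.2)
  dsimp only
  omega

lemma tsum_abs_sub_le_tsum_mul {x b : ℕ → ℝ} (hx : Summable x) (hb : ∀ n, |b n| ≤ 1)
    {m M : ℕ} (hmM : m ≤ M) (hsign : ∀ n ∈ Finset.Ico m M, x n * b n = |x n|) :
    ∑' n, |x n| - 2 * (∑ n ∈ Finset.range m, |x n| + ∑' n, |x (n + M)|) ≤ ∑' n, x n * b n := by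
  have hxb : ∀ n, |x n * b n| ≤ |x n| := fun n => by
    rw [abs_mul]; exact mul_le_of_le_one_right (abs_nonneg _) (hb n)
  have hsxb : Summable fun n => |x n * b n| := hx.abs.of_nonneg_of_le (fun _ => abs_nonneg _) hxb
  have hhead : |∑ n ∈ Finset.range m, x n * b n| ≤ ∑ n ∈ Finset.range m, |x n| :=
    (Finset.abs_sum_le_sum_abs _ _).trans (Finset.sum_le_sum fun n _ => hxb n)
  have htail : |∑' n, x (n + M) * b (n + M)| ≤ ∑' n, |x (n + M)| :=
    (abs_tsum_le_tsum_abs ((summable_nat_add_iff M).mpr hsxb)).trans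
      (((summable_nat_add_iff M).mpr hsxb).tsum_le_tsum (fun n => hxb _)
        ((summable_nat_add_iff M).mpr hx.abs))
  have hmid : ∑ n ∈ Finset.Ico m M, x n * b n = ∑ n ∈ Finset.Ico m M, |x n| :=
    Finset.sum_congr rfl hsign
  rw [← hsxb.of_abs.sum_add_tsum_nat_add M, ← hx.abs.sum_add_tsum_nat_add M,
    ← Finset.sum_range_add_sum_Ico _ hmM, ← Finset.sum_range_add_sum_Ico _ hmM, hmid]
  have := abs_nonneg (∑ n ∈ Finset.range m, x n * b n)
  rw [abs_le] at hhead htail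
  linarith [htail.1, hhead.1]

/-- Schur's property of `ℓ¹`, with sequences of `ℓ¹` given by their coordinates and weak nullity
tested against sign sequences. -/
theorem tendsto_tsum_abs_of_tendsto_tsum_mul {a : ℕ → ℕ → ℝ} (hs : ∀ j, Summable (a j))
    (h : ∀ b : ℕ → ℝ, (∀ n, |b n| ≤ 1) → Tendsto (fun j => ∑' n, a j n * b n) atTop (𝓝 0)) :
    Tendsto (fun j => ∑' n, |a j n|) atTop (𝓝 0) := by
  have hcoord : ∀ n, Tendsto (fun j => |a j n|) atTop (𝓝 0) := fun n => by
    have hb : ∀ m, |(Pi.single n 1 : ℕ → ℝ) m| ≤ 1 := fun m => by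
      by_cases hm : m = n <;> simp [hm]
    simpa [Pi.single_apply] using (h _ hb).abs
  by_contra hlim
  obtain ⟨δ, hδ, hfreq⟩ : ∃ δ > 0, ∃ᶠ j in atTop, δ ≤ ∑' n, |a j n| := by
    rw [Metric.tendsto_atTop] at hlim
    push Not at hlim
    obtain ⟨δ, hδ, hN⟩ := hlim
    refine ⟨δ, hδ, frequently_atTop.mpr fun N => ?_⟩
    obtain ⟨j, hj, hδj⟩ := hN N
    rw [Real.dist_0_eq_abs, abs_of_nonneg (tsum_nonneg fun n => abs_nonneg _)] at hδj
    exact ⟨j, hj, hδj⟩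
  -- Gliding hump: a late `a j` of mass `≥ δ`, almost all of it in a block `[N, M)` beyond the
  -- previous blocks; the sign sequence `b` follows `a j` on its block.
  have hstep : ∀ p : ℕ × ℕ, ∃ q : ℕ × ℕ, p.1 < q.1 ∧ p.2 < q.2 ∧ δ ≤ ∑' n, |a q.1 n| ∧
      ∑ n ∈ Finset.range p.2, |a q.1 n| < δ / 8 ∧ ∑' n, |a q.1 (n + q.2)| < δ / 8 := by
    rintro ⟨J, N⟩
    have hhead : Tendsto (fun j => ∑ n ∈ Finset.range N, |a j n|) atTop (𝓝 0) := by
      simpa using tendsto_finsetSum (Finset.range N) fun n _ => hcoord n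
    obtain ⟨j, hδj, hJj, hNj⟩ := (hfreq.and_eventually ((eventually_gt_atTop J).and
      (hhead.eventually_lt_const (show (0 : ℝ) < δ / 8 by positivity)))).exists
    obtain ⟨M, hNM, hM⟩ := ((eventually_gt_atTop N).and
      ((tendsto_sum_nat_add fun n => |a j n|).eventually_lt_const
        (show (0 : ℝ) < δ / 8 by positivity))).exists
    exact ⟨(j, M), hJj, hNM, hδj, hNj, hM⟩
  choose step hJ hM hbig hhead htail using hstep
  set c : ℕ → ℕ × ℕ := fun k => step^[k] (0, 0)
  have hc : ∀ k, c (k + 1) = step (c k) := fun k => Function.iterate_succ_apply' step k (0, 0)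
  have hJmono : StrictMono fun k => (c k).1 := strictMono_nat_of_lt_succ fun k => hc k ▸ hJ (c k)
  have hMmono : StrictMono fun k => (c k).2 := strictMono_nat_of_lt_succ fun k => hc k ▸ hM (c k)
  obtain ⟨κ, hκ⟩ := hMmono.exists_index_of_mem_Ico
  set b : ℕ → ℝ := fun n => SignType.sign (a (c (κ n + 1)).1 n)
  have hb : ∀ n, |b n| ≤ 1 := fun n => by
    simp only [b]; cases SignType.sign (a (c (κ n + 1)).1 n) <;> simp
  have hhump : ∀ k, δ / 2 ≤ ∑' n, a (c (k + 1)).1 n * b n := fun k => by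
    have := tsum_abs_sub_le_tsum_mul (hs (c (k + 1)).1) hb (hMmono.monotone k.le_succ)
      fun n hn => by simp only [b, hκ k n hn, self_mul_sign]
    have := hbig (c k); have := hhead (c k); have := htail (c k)
    rw [← hc k] at *
    linarith
  have hlim : Tendsto (fun k => ∑' n, a (c (k + 1)).1 n * b n) atTop (𝓝 0) :=
    (h b hb).comp (hJmono.tendsto_atTop.comp (tendsto_add_atTop_nat 1))
  linarith [ge_of_tendsto hlim (Eventually.of_forall hhump)]

lemma norm_smul_le_abs {F : Type*} [NormedAddCommGroup F] [NormedSpace ℝ F] {y : F}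
    (hy : ‖y‖ ≤ 1) (c : ℝ) : ‖c • y‖ ≤ |c| := by
  rw [norm_smul, Real.norm_eq_abs]
  exact mul_le_of_le_one_right (abs_nonneg c) hy

/-- Encodes the bounded positive operator `z ↦ (g n z)ₙ` into `ℓ¹`. -/
structure DominatedSeq {G : Type*} [NormedAddCommGroup G] [Lattice G] [NormedSpace ℝ G]
    (f : G →L[ℝ] ℝ) (g : ℕ → G →L[ℝ] ℝ) : Prop where
  nonneg : ∀ n, dualLe 0 (g n)
  sum_le : ∀ (s : Finset ℕ) (z : G), 0 ≤ z → ∑ n ∈ s, g n z ≤ f z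

namespace DominatedSeq

variable {G : Type*} [NormedAddCommGroup G] [Lattice G] [NormedSpace ℝ G]
  {f : G →L[ℝ] ℝ} {g : ℕ → G →L[ℝ] ℝ}

lemma of_antitone {h : ℕ → G →L[ℝ] ℝ} (hpos : ∀ n, dualLe 0 (h n))
    (hanti : ∀ n, dualLe (h (n + 1)) (h n)) : DominatedSeq (h 0) fun n => h n - h (n + 1) := by
  have hnonneg : ∀ n, dualLe 0 (h n - h (n + 1)) := fun n z hz => by
    simpa using hanti n z hz
  refine ⟨hnonneg, fun s z hz => ?_⟩
  calc ∑ n ∈ s, (h n - h (n + 1)) z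
      ≤ ∑ n ∈ Finset.range (s.sup id).succ, (h n - h (n + 1)) z :=
        Finset.sum_le_sum_of_subset_of_nonneg s.subset_range_sup_succ
          fun n _ _ => (hnonneg n).apply_nonneg hz
    _ = h 0 z - h (s.sup id).succ z := by
        simp only [sub_apply, Finset.sum_range_sub']
    _ ≤ h 0 z := sub_le_self _ ((hpos _).apply_nonneg hz)

variable [IsOrderedAddMonoid G] (hg : DominatedSeq f g)
include hg

lemma sum_abs_le (s : Finset ℕ) (z : G) : ∑ n ∈ s, |g n z| ≤ f |z| :=
  (Finset.sum_le_sum fun n _ => (hg.nonneg n).abs_apply_le z).trans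
    (hg.sum_le s |z| (abs_nonneg z))

lemma summable_abs (z : G) : Summable fun n => |g n z| :=
  summable_of_sum_range_le (fun _ => abs_nonneg _) fun _ => hg.sum_abs_le _ z

lemma tsum_abs_le (z : G) : ∑' n, |g n z| ≤ f |z| :=
  (hg.summable_abs z).tsum_le_of_sum_le fun s => hg.sum_abs_le s z

lemma tendsto_apply (z : G) : Tendsto (fun n => g n z) atTop (𝓝 0) :=
  (hg.summable_abs z).of_abs.tendsto_atTop_zero

lemma abs_apply_le_pabs [HasSolidNorm G] (n : ℕ) (z : G) : |g n z| ≤ pabs f z :=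
  (show |g n z| ≤ f |z| by simpa using hg.sum_abs_le {n} z).trans (apply_abs_le_pabs f z)

/-- The seminorm `pabs f` dominates every `|g n|`, while `g n → 0` pointwise, so no finite
`|σ|`-net can follow the points `a n`. -/
lemma not_awTotallyBounded [HasSolidNorm G] {A : Set G} {a : ℕ → G} (ha : ∀ n, a n ∈ A)
    {c : ℝ} (hc : 0 < c) (hga : ∀ n, c ≤ g n (a n)) : ¬ AWTotallyBounded A := by
  intro hA
  obtain ⟨Φ, -, hΦ⟩ := hA (c / 2) (by positivity) {f}
  have hsmall : ∀ᶠ n in atTop, ∀ y ∈ Φ, g n y < c / 2 :=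
    (eventually_all_finset Φ).2 fun y _ =>
      (hg.tendsto_apply y).eventually_lt_const (by positivity)
  obtain ⟨n, hn⟩ := hsmall.exists
  obtain ⟨y, hyΦ, hy⟩ := hΦ (a n) (ha n)
  have hnet : g n (a n) - g n y < c / 2 := by
    rw [← map_sub]
    exact ((le_abs_self _).trans (hg.abs_apply_le_pabs n _)).trans_lt
      (hy f (Finset.mem_singleton_self f))
  linarith [hga n, hn y hyΦ]

section Operator

variable {F : Type*} [NormedAddCommGroup F] [NormedSpace ℝ F] {y : ℕ → F} (hy : ∀ n, ‖y n‖ ≤ 1)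
include hy

lemma norm_tsum_smul_le (z : G) : ‖∑' n, g n z • y n‖ ≤ ∑' n, |g n z| := by
  have hsum : Summable fun n => ‖g n z • y n‖ :=
    (hg.summable_abs z).of_nonneg_of_le (fun _ => norm_nonneg _) fun n =>
      norm_smul_le_abs (hy n) _
  exact (norm_tsum_le_tsum_norm hsum).trans
    (hsum.tsum_le_tsum (fun n => norm_smul_le_abs (hy n) _) (hg.summable_abs z))

variable [CompleteSpace F]

lemma summable_smul (z : G) : Summable fun n => g n z • y n :=
  (hg.summable_abs z).of_norm_bounded fun n => norm_smul_le_abs (hy n) _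

def toOp [HasSolidNorm G] : G →L[ℝ] F :=
  LinearMap.mkContinuous
    { toFun := fun z => ∑' n, g n z • y n
      map_add' := fun z w => by
        simp only [map_add, add_smul]
        exact (hg.summable_smul hy z).tsum_add (hg.summable_smul hy w)
      map_smul' := fun c z => by
        simp only [map_smul, smul_eq_mul, mul_smul, RingHom.id_apply]
        exact (hg.summable_smul hy z).tsum_const_smul c }
    ‖f‖ fun z => (hg.norm_tsum_smul_le hy z).trans
      ((hg.tsum_abs_le z).trans (apply_abs_le_opNorm_mul f z))

lemma toOp_apply [HasSolidNorm G] (z : G) : hg.toOp hy z = ∑' n, g n z • y n := rfl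

lemma mul_apply_le_apply_toOp [HasSolidNorm G] [Lattice F] {φ : F →L[ℝ] ℝ} (hφ : dualLe 0 φ)
    (hy0 : ∀ n, 0 ≤ y n) {z : G} (hz : 0 ≤ z) (n : ℕ) : g n z * φ (y n) ≤ φ (hg.toOp hy z) := by
  have hsum := (hg.summable_smul hy z).hasSum.mapL φ
  simp only [map_smul, smul_eq_mul] at hsum
  exact le_hasSum hsum n fun k _ =>
    mul_nonneg ((hg.nonneg k).apply_nonneg hz) (hφ.apply_nonneg (hy0 k))

end Operator

lemma tendsto_tsum_abs_of_weaklyNull [HasSolidNorm G] {u : ℕ → G} (hu : WeaklyNull u) :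
    Tendsto (fun j => ∑' n, |g n (u j)|) atTop (𝓝 0) :=
  tendsto_tsum_abs_of_tendsto_tsum_mul (fun j => (hg.summable_abs (u j)).of_abs) fun b hb => by
    simpa only [toOp_apply, smul_eq_mul] using hu (hg.toOp (y := b) hb)

lemma dunfordPettisOp_toOp [HasSolidNorm G] {F : Type*} [NormedAddCommGroup F] [NormedSpace ℝ F]
    [CompleteSpace F] {y : ℕ → F} (hy : ∀ n, ‖y n‖ ≤ 1) : DunfordPettisOp (hg.toOp hy) :=
  fun u hu => squeeze_zero (fun _ => norm_nonneg _) (fun j => hg.norm_tsum_smul_le hy (u j))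
    (hg.tendsto_tsum_abs_of_weaklyNull hu)

end DominatedSeq

section Extraction

variable {G : Type*} [NormedAddCommGroup G] [Lattice G] [IsOrderedAddMonoid G] [HasSolidNorm G]
  [NormedSpace ℝ G]

/-- The positive cone generates `G`, so an additive function on it extends to the linear map
`z ↦ φ z⁺ - φ z⁻`, which `0 ≤ φ ≤ f` makes continuous. -/
lemma exists_clm_eq_of_add_of_le {φ : G → ℝ} {f : G →L[ℝ] ℝ}
    (hadd : ∀ y z, 0 ≤ y → 0 ≤ z → φ (y + z) = φ y + φ z)
    (hφ : ∀ z, 0 ≤ z → 0 ≤ φ z ∧ φ z ≤ f z) :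
    ∃ ℓ : G →L[ℝ] ℝ, ∀ z, 0 ≤ z → ℓ z = φ z := by
  have hφ0 : φ 0 = 0 := by simpa using hadd 0 0 le_rfl le_rfl
  have hpos_eq : ∀ x : G, x⁺ = x + x⁻ := fun x => eq_add_of_sub_eq (posPart_sub_negPart x)
  let L : G →+ ℝ :=
    { toFun := fun z => φ z⁺ - φ z⁻
      map_zero' := by simp [hφ0]
      map_add' := fun a b => by
        have hid : (a + b)⁺ + (a⁻ + b⁻) = (a + b)⁻ + (a⁺ + b⁺) := by
          rw [hpos_eq (a + b), hpos_eq a, hpos_eq b]; abel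
        have hφid := congrArg φ hid
        rw [hadd _ _ (posPart_nonneg _) (add_nonneg (negPart_nonneg _) (negPart_nonneg _)),
          hadd _ _ (negPart_nonneg _) (negPart_nonneg _),
          hadd _ _ (negPart_nonneg _) (add_nonneg (posPart_nonneg _) (posPart_nonneg _)),
          hadd _ _ (posPart_nonneg _) (posPart_nonneg _)] at hφid
        linarith }
  have hbound : ∀ z, ‖L z‖ ≤ ‖f‖ * ‖z‖ := fun z => by
    obtain ⟨hplus0, hplus⟩ := hφ _ (posPart_nonneg z)
    obtain ⟨hminus0, hminus⟩ := hφ _ (negPart_nonneg z)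
    have habs : f z⁺ + f z⁻ ≤ ‖f‖ * ‖z‖ := by
      rw [← map_add, posPart_add_negPart]; exact apply_abs_le_opNorm_mul f z
    show |φ z⁺ - φ z⁻| ≤ _
    rw [abs_le]
    constructor <;> linarith
  refine ⟨L.toRealLinearMap (AddMonoidHomClass.continuous_of_bound L _ hbound), fun z hz => ?_⟩
  show φ z⁺ - φ z⁻ = φ z
  rw [posPart_eq_self.2 hz, negPart_eq_zero.2 hz, hφ0, sub_zero]

/-- The infimum of a downward directed family of positive functionals is computed pointwise on
the positive cone (Riesz–Kantorovich). -/
lemma exists_apply_lt_of_forall_dualLe {ι : Type*} [Preorder ι] [IsDirectedOrder ι] [Nonempty ι]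
    {f : ι → G →L[ℝ] ℝ} (hanti : ∀ i j, i ≤ j → dualLe (f j) (f i))
    (hpos : ∀ i, dualLe 0 (f i)) (hinf : ∀ g, (∀ i, dualLe g (f i)) → dualLe g 0)
    {z : G} (hz : 0 ≤ z) {ε : ℝ} (hε : 0 < ε) : ∃ i, f i z < ε := by
  set φ : G → ℝ := fun w => ⨅ i, f i w
  have hle : ∀ i w, 0 ≤ w → φ w ≤ f i w := fun i w hw =>
    ciInf_le ⟨0, by rintro _ ⟨j, rfl⟩; exact (hpos j).apply_nonneg hw⟩ i
  have hadd : ∀ y w, 0 ≤ y → 0 ≤ w → φ (y + w) = φ y + φ w := fun y w hy hw => le_antisymm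
    (le_ciInf_add_ciInf fun i j => by
      obtain ⟨k, hik, hjk⟩ := exists_ge_ge i j
      calc φ (y + w) ≤ f k (y + w) := hle k _ (add_nonneg hy hw)
        _ = f k y + f k w := map_add _ _ _
        _ ≤ f i y + f j w := add_le_add (hanti i k hik y hy) (hanti j k hjk w hw))
    (le_ciInf fun i => (add_le_add (hle i y hy) (hle i w hw)).trans_eq (map_add _ _ _).symm)
  obtain ⟨i₀⟩ := ‹Nonempty ι›
  obtain ⟨ℓ, hℓ⟩ := exists_clm_eq_of_add_of_le hadd fun w hw =>
    ⟨le_ciInf fun i => (hpos i).apply_nonneg hw, hle i₀ w hw⟩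
  have hφz : φ z ≤ 0 := by
    simpa [hℓ z hz] using hinf ℓ (fun i w hw => (hℓ w hw).trans_le (hle i w hw)) z hz
  exact exists_lt_of_ciInf_lt (hφz.trans_lt hε)

/-- `g n = f (a n) - f (a (n + 1))` along a chain `a` in the net, chosen so that `f (a (n + 1))` is
already small at a unit vector where `f (a n)` is large. -/
theorem exists_dominatedSeq_of_not_dualOrderContinuousNorm (h : ¬ DualOrderContinuousNorm G) :
    ∃ (f : G →L[ℝ] ℝ) (g : ℕ → G →L[ℝ] ℝ), DominatedSeq f g ∧
      ∃ (x : ℕ → G) (δ : ℝ), 0 < δ ∧ ∀ n, 0 ≤ x n ∧ ‖x n‖ ≤ 1 ∧ δ ≤ g n (x n) := by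
  unfold DualOrderContinuousNorm at h
  push Not at h
  obtain ⟨ι, _, _, hdir, f, hanti, hpos, hinf, hnot⟩ := h
  have : IsDirectedOrder ι := ⟨hdir⟩
  have hbdd : BddBelow (range fun i => ‖f i‖) := ⟨0, by rintro _ ⟨i, rfl⟩; exact norm_nonneg _⟩
  set ε := ⨅ i, ‖f i‖
  have hε : 0 < ε := by
    refine (Real.iInf_nonneg fun i => norm_nonneg _).lt_of_ne fun h0 => hnot ?_
    exact h0 ▸ tendsto_atTop_ciInf (fun i j hij => (hpos j).opNorm_le (hanti i j hij)) hbdd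
  have hx : ∀ i, ∃ u : G, 0 ≤ u ∧ ‖u‖ ≤ 1 ∧ ε / 2 < f i u := fun i =>
    (hpos i).exists_nonneg_lt_apply ((half_lt_self hε).trans_le (ciInf_le hbdd i))
  choose x hx0 hx1 hxf using hx
  have hnext : ∀ i, ∃ j, i ≤ j ∧ f j (x i) < ε / 4 := fun i => by
    obtain ⟨j, hj⟩ :=
      exists_apply_lt_of_forall_dualLe hanti hpos hinf (hx0 i) (by positivity : 0 < ε / 4)
    obtain ⟨k, hik, hjk⟩ := exists_ge_ge i j
    exact ⟨k, hik, (hanti j k hjk _ (hx0 i)).trans_lt hj⟩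
  choose next hle hnext using hnext
  obtain ⟨i₀⟩ := ‹Nonempty ι›
  set a : ℕ → ι := fun n => next^[n] i₀
  have ha : ∀ n, a (n + 1) = next (a n) := fun n => Function.iterate_succ_apply' next n i₀
  refine ⟨_, _, DominatedSeq.of_antitone (fun n => hpos (a n))
      fun n => ha n ▸ hanti _ _ (hle (a n)), fun n => x (a n), ε / 4, by positivity,
    fun n => ⟨hx0 _, hx1 _, ?_⟩⟩
  have hsmall := ha n ▸ hnext (a n)
  have hbig := hxf (a n)
  simp only [sub_apply]
  linarith

end Extraction

theorem stmt18_general {E F : Type*} [NormedAddCommGroup E] [Lattice E] [HasSolidNorm E] [IsOrderedAddMonoid E] [NormedSpace ℝ E] [NormedAddCommGroup F] [Lattice F] [HasSolidNorm F] [IsOrderedAddMonoid F] [NormedSpace ℝ F] [CompleteSpace F]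
    (h : ∀ T : E →L[ℝ] F, DunfordPettisOp T → PLCompact T) :
    DualOrderContinuousNorm E ∨ DualOrderContinuousNorm F := by
  by_contra! hcon
  obtain ⟨fE, gE, hgE, x, δE, hδE, hx⟩ :=
    exists_dominatedSeq_of_not_dualOrderContinuousNorm hcon.1
  obtain ⟨fF, gF, hgF, y, δF, hδF, hy⟩ :=
    exists_dominatedSeq_of_not_dualOrderContinuousNorm hcon.2
  set T := hgE.toOp fun n => (hy n).2.1
  refine hgF.not_awTotallyBounded (A := T '' Metric.closedBall 0 1) (a := fun n => T (x n))
    (fun n => ⟨x n, mem_closedBall_zero_iff.2 (hx n).2.1, rfl⟩) (mul_pos hδE hδF) (fun n => ?_)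
    (h T (hgE.dunfordPettisOp_toOp _))
  calc δE * δF ≤ gE n (x n) * gF n (y n) :=
        mul_le_mul (hx n).2.2 (hy n).2.2 hδF.le ((hgE.nonneg n).apply_nonneg (hx n).1)
    _ ≤ gF n (T (x n)) :=
        hgE.mul_apply_le_apply_toOp _ (hgF.nonneg n) (fun k => (hy k).1) (hx n).1 n

theorem stmt18 {E F : Type*} [NormedAddCommGroup E] [Lattice E] [HasSolidNorm E] [IsOrderedAddMonoid E] [NormedSpace ℝ E] [CompleteSpace E] [NormedAddCommGroup F] [Lattice F] [HasSolidNorm F] [IsOrderedAddMonoid F] [NormedSpace ℝ F] [CompleteSpace F]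
    (h : ∀ T : E →L[ℝ] F, DunfordPettisOp T → PLCompact T) :
    DualOrderContinuousNorm E ∨ DualOrderContinuousNorm F :=
  stmt18_general h
end
end
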